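/- Let O ⊆ ℝ^d be a Lebesgue-measurable set of finite Lebesgue measure, let r and q be real numbers with 1 < q < r, let κ ∈ ℝ, let β > 0, and let u, v ∈ L^{r+1}(O;ℝ^d). Then |κ| · | ∫_O (|u|^{q-1} u − |v|^{q-1} v) · (u − v) dx | ≤ (β/2) ∫_O |u|^{r-1} |u − v|^2 dx + (β/4) ∫_O |v|^{r-1} |u − v|^2 dx + (ϱ_{2,r} + ϱ_{3,r}) ∫_O |u − v|^2 dx, where ϱ_{2,r} = ((r-q)/(r-1)) · (2(q-1)/(β(r-1)))^{(q-1)/(r-q)} · (|κ| q 2^{q-1})^{(r-1)/(r-q)} and ϱ_{3,r} = ((r-q)/(r-1)) · (4(q-1)/(β(r-1)))^{(q-1)/(r-q)} · (|κ| q 2^{q-1})^{(r-1)/(r-q)}. -/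

import Mathlib

/-!
Write `s = ‖a‖`, `t = ‖b‖`. The integrand splits as
`⟪s^{q-1} a - t^{q-1} b, a - b⟫ = (s^{q-1} + t^{q-1}) (s t - ⟪a, b⟫) + (s^q - t^q)(s - t)`,
a sum of two nonnegative terms; the first is at most `(s^{q-1} + t^{q-1}) ‖a - b‖² / 2` and the
second, by the tangent-line (Bernoulli) bound for `x ↦ x^q`, at most
`q (s^{q-1} + t^{q-1}) ‖a - b‖²`. Young's inequality with exponents `(r-1)/(q-1)` and
`(r-1)/(r-q)` then absorbs `K s^{q-1}` into `ε s^{r-1}` plus a constant, which produces `ϱ_{2,r}`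
(for `ε = β/2`) and `ϱ_{3,r}` (for `ε = β/4`). Integrating needs only that `‖u‖^{r-1}‖u - v‖²`
is dominated by `‖u‖^{r+1} + ‖u - v‖^{r+1}` and that `L^{r+1} ⊆ L²` on a finite measure space.
-/

open scoped RealInnerProductSpace
open MeasureTheory

namespace Real

lemma rpow_sub_rpow_le_mul_rpow_sub_one_mul {q s t : ℝ} (hq : 1 ≤ q) (ht : 0 ≤ t)
    (hts : t ≤ s) : s ^ q - t ^ q ≤ q * s ^ (q - 1) * (s - t) := by
  rcases (ht.trans hts).eq_or_lt with hs | hs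
  · obtain rfl : t = 0 := le_antisymm (hs ▸ hts) ht
    simp [← hs]
  have bernoulli := one_add_mul_self_le_rpow_one_add (s := t / s - 1)
    (by linarith [div_nonneg ht hs.le]) hq
  rw [add_sub_cancel, div_rpow ht hs.le, le_div_iff₀ (rpow_pos_of_pos hs q)] at bernoulli
  rw [rpow_sub_one hs.ne']
  field_simp
  field_simp at bernoulli
  nlinarith

lemma rpow_sub_rpow_mul_sub_le {q s t : ℝ} (hq : 1 ≤ q) (hs : 0 ≤ s) (ht : 0 ≤ t) :
    (s ^ q - t ^ q) * (s - t) ≤ q * (s ^ (q - 1) + t ^ (q - 1)) * (s - t) ^ 2 := by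
  wlog hts : t ≤ s generalizing s t
  · have := this ht hs (le_of_not_ge hts)
    linarith
  have hq0 : 0 ≤ q * t ^ (q - 1) * (s - t) ^ 2 := by positivity
  calc (s ^ q - t ^ q) * (s - t) ≤ q * s ^ (q - 1) * (s - t) * (s - t) :=
        mul_le_mul_of_nonneg_right (rpow_sub_rpow_le_mul_rpow_sub_one_mul hq ht hts)
          (sub_nonneg.2 hts)
    _ ≤ q * (s ^ (q - 1) + t ^ (q - 1)) * (s - t) ^ 2 := by nlinarith

lemma young_inequality_of_nonneg_eps {a b p p' ε : ℝ} (ha : 0 ≤ a) (hb : 0 ≤ b)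
    (hpp' : p.HolderConjugate p') (hε : 0 < ε) :
    a * b ≤ ε * a ^ p + (ε * p)⁻¹ ^ (p' / p) * b ^ p' / p' := by
  have hp := hpp'.pos
  have hεp : 0 < ε * p := mul_pos hε hp
  have young := young_inequality_of_nonneg (mul_nonneg (rpow_nonneg hεp.le p⁻¹) ha)
    (mul_nonneg (rpow_nonneg (inv_nonneg.2 hεp.le) p⁻¹) hb) hpp'
  rw [mul_rpow (rpow_nonneg hεp.le _) ha, mul_rpow (rpow_nonneg (inv_nonneg.2 hεp.le) _) hb,
    ← rpow_mul hεp.le, ← rpow_mul (inv_nonneg.2 hεp.le), inv_mul_cancel₀ hp.ne', rpow_one,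
    ← div_eq_inv_mul] at young
  calc a * b = ((ε * p) ^ p⁻¹ * a) * ((ε * p)⁻¹ ^ p⁻¹ * b) := by
        rw [mul_mul_mul_comm, ← mul_rpow hεp.le (inv_nonneg.2 hεp.le), mul_inv_cancel₀ hεp.ne',
          one_rpow, one_mul]
    _ ≤ _ := young
    _ = _ := by field_simp

end Real

/-- `youngConst r q ε K` is the paper's `ϱ_{2,r}` for `ε = β/2` and `ϱ_{3,r}` for `ε = β/4`,
with `K = |κ| q 2^{q-1}`. -/
noncomputable def youngConst (r q ε K : ℝ) : ℝ :=
  ((r - q) / (r - 1)) * ((q - 1) / (ε * (r - 1))) ^ ((q - 1) / (r - q)) *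
    K ^ ((r - 1) / (r - q))

lemma mul_rpow_le_mul_rpow_add_youngConst {r q K ε t : ℝ} (hq : 1 < q) (hqr : q < r)
    (hK : 0 ≤ K) (hε : 0 < ε) (ht : 0 ≤ t) :
    K * t ^ (q - 1) ≤ ε * t ^ (r - 1) + youngConst r q ε K := by
  have hq1 : 0 < q - 1 := by linarith
  have hrq : 0 < r - q := by linarith
  have hr1 : 0 < r - 1 := by linarith
  have hconj : ((r - 1) / (q - 1)).HolderConjugate ((r - 1) / (r - q)) := by
    rw [← inv_div, ← inv_div (r - q)]
    exact .inv_inv (by positivity) (by positivity) (by field_simp; ring)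
  have young := Real.young_inequality_of_nonneg_eps (Real.rpow_nonneg ht (q - 1)) hK hconj hε
  rw [← Real.rpow_mul ht, mul_div_cancel₀ _ hq1.ne'] at young
  have hbase : (ε * ((r - 1) / (q - 1)))⁻¹ = (q - 1) / (ε * (r - 1)) := by
    field_simp
  have hexp : (r - 1) / (r - q) / ((r - 1) / (q - 1)) = (q - 1) / (r - q) := by
    field_simp
  calc K * t ^ (q - 1) = t ^ (q - 1) * K := mul_comm _ _
    _ ≤ _ := young
    _ = ε * t ^ (r - 1) + youngConst r q ε K := by
      rw [hbase, hexp, youngConst]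
      field_simp

lemma rpow_mul_sq_le_rpow_add_rpow {r A B : ℝ} (hr : 1 ≤ r) (hA : 0 ≤ A) (hB : 0 ≤ B) :
    A ^ (r - 1) * B ^ 2 ≤ A ^ (r + 1) + B ^ (r + 1) := by
  have hpow (s : ℝ) (hs : 0 ≤ s) : s ^ (r - 1) * s ^ 2 = s ^ (r + 1) := by
    rw [← Real.rpow_natCast, ← Real.rpow_add' hs (by norm_num; linarith)]
    ring_nf
  rcases le_total A B with h | h
  · calc A ^ (r - 1) * B ^ 2 ≤ B ^ (r - 1) * B ^ 2 := by gcongr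
      _ ≤ A ^ (r + 1) + B ^ (r + 1) := by
        rw [hpow B hB]; exact le_add_of_nonneg_left (Real.rpow_nonneg hA _)
  · calc A ^ (r - 1) * B ^ 2 ≤ A ^ (r - 1) * A ^ 2 := by gcongr
      _ ≤ A ^ (r + 1) + B ^ (r + 1) := by
        rw [hpow A hA]; exact le_add_of_nonneg_right (Real.rpow_nonneg hB _)

section InnerProductSpace

variable {E : Type*} [NormedAddCommGroup E] [InnerProductSpace ℝ E]

lemma inner_rpow_smul_sub_rpow_smul (p : ℝ) (a b : E) :
    ⟪‖a‖ ^ p • a - ‖b‖ ^ p • b, a - b⟫ =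
      (‖a‖ ^ p + ‖b‖ ^ p) * (‖a‖ * ‖b‖ - ⟪a, b⟫) +
        (‖a‖ ^ p * ‖a‖ - ‖b‖ ^ p * ‖b‖) * (‖a‖ - ‖b‖) := by
  simp only [inner_sub_left, inner_sub_right, real_inner_smul_left, real_inner_self_eq_norm_sq,
    real_inner_comm a b]
  ring

lemma inner_rpow_smul_sub_rpow_smul_nonneg {p : ℝ} (hp : 0 ≤ p) (a b : E) :
    0 ≤ ⟪‖a‖ ^ p • a - ‖b‖ ^ p • b, a - b⟫ := by
  have hmono : MonotoneOn (fun s : ℝ ↦ s ^ p * s) (Set.Ici 0) := fun s hs t ht hst ↦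
    mul_le_mul (Real.rpow_le_rpow hs hst hp) hst hs (Real.rpow_nonneg ht p)
  have hradial : 0 ≤ (‖a‖ ^ p * ‖a‖ - ‖b‖ ^ p * ‖b‖) * (‖a‖ - ‖b‖) := by
    rcases le_total ‖b‖ ‖a‖ with h | h
    · exact mul_nonneg (sub_nonneg.2 (hmono (norm_nonneg b) (norm_nonneg a) h)) (sub_nonneg.2 h)
    · exact mul_nonneg_of_nonpos_of_nonpos
        (sub_nonpos.2 (hmono (norm_nonneg a) (norm_nonneg b) h)) (sub_nonpos.2 h)
  rw [inner_rpow_smul_sub_rpow_smul]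
  exact add_nonneg (mul_nonneg (by positivity) (sub_nonneg.2 (real_inner_le_norm a b))) hradial

lemma inner_rpow_smul_sub_rpow_smul_le {q : ℝ} (hq : 1 ≤ q) (a b : E) :
    ⟪‖a‖ ^ (q - 1) • a - ‖b‖ ^ (q - 1) • b, a - b⟫ ≤
      q * (‖a‖ ^ (q - 1) + ‖b‖ ^ (q - 1)) * ‖a - b‖ ^ 2 := by
  have hpow (s : ℝ) (hs : 0 ≤ s) : s ^ (q - 1) * s = s ^ q := by
    rw [← Real.rpow_add_one' hs (by linarith), sub_add_cancel]
  have hnorms : (‖a‖ - ‖b‖) ^ 2 ≤ ‖a - b‖ ^ 2 := by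
    rw [← sq_abs]
    exact pow_le_pow_left₀ (abs_nonneg _) (abs_norm_sub_norm_le a b) 2
  have hcross : ‖a‖ * ‖b‖ - ⟪a, b⟫ = (‖a - b‖ ^ 2 - (‖a‖ - ‖b‖) ^ 2) / 2 := by
    rw [norm_sub_sq_real]
    ring
  have hradial := Real.rpow_sub_rpow_mul_sub_le hq (norm_nonneg a) (norm_nonneg b)
  have hS : 0 ≤ ‖a‖ ^ (q - 1) + ‖b‖ ^ (q - 1) := by positivity
  rw [inner_rpow_smul_sub_rpow_smul, hpow _ (norm_nonneg a), hpow _ (norm_nonneg b), hcross]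
  nlinarith [mul_nonneg hS (sub_nonneg.2 hnorms)]

lemma mul_abs_inner_rpow_smul_sub_rpow_smul_le {r q κ K ε₁ ε₂ : ℝ} (hq : 1 < q) (hqr : q < r)
    (hK : |κ| * q ≤ K) (hε₁ : 0 < ε₁) (hε₂ : 0 < ε₂) (a b : E) :
    |κ| * |⟪‖a‖ ^ (q - 1) • a - ‖b‖ ^ (q - 1) • b, a - b⟫| ≤
      ε₁ * (‖a‖ ^ (r - 1) * ‖a - b‖ ^ 2) + ε₂ * (‖b‖ ^ (r - 1) * ‖a - b‖ ^ 2) +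
        (youngConst r q ε₁ K + youngConst r q ε₂ K) * ‖a - b‖ ^ 2 := by
  have hK0 : 0 ≤ K := (mul_nonneg (abs_nonneg κ) (by linarith)).trans hK
  have ha := mul_rpow_le_mul_rpow_add_youngConst hq hqr hK0 hε₁ (norm_nonneg a)
  have hb := mul_rpow_le_mul_rpow_add_youngConst hq hqr hK0 hε₂ (norm_nonneg b)
  rw [abs_of_nonneg (inner_rpow_smul_sub_rpow_smul_nonneg (by linarith) a b)]
  calc |κ| * ⟪‖a‖ ^ (q - 1) • a - ‖b‖ ^ (q - 1) • b, a - b⟫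
      ≤ |κ| * (q * (‖a‖ ^ (q - 1) + ‖b‖ ^ (q - 1)) * ‖a - b‖ ^ 2) :=
        mul_le_mul_of_nonneg_left (inner_rpow_smul_sub_rpow_smul_le hq.le a b) (abs_nonneg κ)
    _ ≤ (K * ‖a‖ ^ (q - 1) + K * ‖b‖ ^ (q - 1)) * ‖a - b‖ ^ 2 := by
        rw [← mul_add, ← mul_assoc, ← mul_assoc]
        gcongr
    _ ≤ (ε₁ * ‖a‖ ^ (r - 1) + youngConst r q ε₁ K + (ε₂ * ‖b‖ ^ (r - 1) + youngConst r q ε₂ K)) *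
          ‖a - b‖ ^ 2 := by
        gcongr
    _ = _ := by ring

end InnerProductSpace

namespace MeasureTheory

variable {α : Type*} [MeasurableSpace α] {μ : Measure α}

lemma MemLp.integrable_norm_rpow_mul_norm_sq {F G : Type*} [NormedAddCommGroup F]
    [NormedAddCommGroup G] {r : ℝ} (hr : 1 ≤ r) {f : α → F} {g : α → G}
    (hf : MemLp f (ENNReal.ofReal (r + 1)) μ) (hg : MemLp g (ENNReal.ofReal (r + 1)) μ) :
    Integrable (fun x ↦ ‖f x‖ ^ (r - 1) * ‖g x‖ ^ 2) μ := by
  have hp : ENNReal.ofReal (r + 1) ≠ 0 := by simp; linarith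
  have htoReal : (ENNReal.ofReal (r + 1)).toReal = r + 1 := ENNReal.toReal_ofReal (by linarith)
  have hf' := hf.integrable_norm_rpow hp ENNReal.ofReal_ne_top
  have hg' := hg.integrable_norm_rpow hp ENNReal.ofReal_ne_top
  rw [htoReal] at hf' hg'
  refine (hf'.add hg').mono' ((hf.1.norm.aemeasurable.pow_const _).mul
    (hg.1.norm.aemeasurable.pow_const 2)).aestronglyMeasurable (ae_of_all _ fun x ↦ ?_)
  rw [Real.norm_of_nonneg (by positivity)]
  exact rpow_mul_sq_le_rpow_add_rpow hr (norm_nonneg _) (norm_nonneg _)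

lemma mul_abs_integral_inner_rpow_smul_sub_rpow_smul_le [IsFiniteMeasure μ]
    {E : Type*} [NormedAddCommGroup E] [InnerProductSpace ℝ E] {r q κ K ε₁ ε₂ : ℝ}
    (hq : 1 < q) (hqr : q < r) (hK : |κ| * q ≤ K) (hε₁ : 0 < ε₁) (hε₂ : 0 < ε₂) {u v : α → E}
    (hu : MemLp u (ENNReal.ofReal (r + 1)) μ) (hv : MemLp v (ENNReal.ofReal (r + 1)) μ) :
    |κ| * |∫ x, ⟪‖u x‖ ^ (q - 1) • u x - ‖v x‖ ^ (q - 1) • v x, u x - v x⟫ ∂μ| ≤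
      ε₁ * ∫ x, ‖u x‖ ^ (r - 1) * ‖u x - v x‖ ^ 2 ∂μ +
        ε₂ * ∫ x, ‖v x‖ ^ (r - 1) * ‖u x - v x‖ ^ 2 ∂μ +
        (youngConst r q ε₁ K + youngConst r q ε₂ K) * ∫ x, ‖u x - v x‖ ^ 2 ∂μ := by
  have hr : 1 ≤ r := by linarith
  have huv := hu.sub hv
  have hu_int : Integrable (fun x ↦ ‖u x‖ ^ (r - 1) * ‖u x - v x‖ ^ 2) μ :=
    hu.integrable_norm_rpow_mul_norm_sq hr huv
  have hv_int : Integrable (fun x ↦ ‖v x‖ ^ (r - 1) * ‖u x - v x‖ ^ 2) μ :=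
    hv.integrable_norm_rpow_mul_norm_sq hr huv
  have huv_int : Integrable (fun x ↦ ‖u x - v x‖ ^ 2) μ :=
    (huv.mono_exponent (p := (2 : ℕ)) (by
      rw [← ENNReal.ofReal_natCast]
      exact ENNReal.ofReal_le_ofReal (by push_cast; linarith))).integrable_norm_pow'
  have hG₁ := hu_int.const_mul ε₁
  have hG₂ := hv_int.const_mul ε₂
  have hG₃ := huv_int.const_mul (youngConst r q ε₁ K + youngConst r q ε₂ K)
  rw [← abs_mul, ← integral_const_mul κ, ← Real.norm_eq_abs]
  refine (norm_integral_le_of_norm_le ((hG₁.add hG₂).add hG₃)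
    (ae_of_all _ fun x ↦ ?_)).trans_eq ?_
  · rw [Real.norm_eq_abs, abs_mul]
    exact mul_abs_inner_rpow_smul_sub_rpow_smul_le hq hqr hK hε₁ hε₂ _ _
  · rw [integral_add' (hG₁.add hG₂) hG₃, integral_add' hG₁ hG₂]
    simp only [integral_const_mul]

end MeasureTheory

theorem pumping_relaxed_monotonicity_general
    (d : ℕ) (O : Set (EuclideanSpace ℝ (Fin d)))
    (hOfin : volume O ≠ ⊤)
    (r q : ℝ) (hq : 1 < q) (hqr : q < r)
    (κ β : ℝ) (hβ : 0 < β)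
    (u v : EuclideanSpace ℝ (Fin d) → EuclideanSpace ℝ (Fin d))
    (hu : MemLp u (ENNReal.ofReal (r + 1)) (volume.restrict O))
    (hv : MemLp v (ENNReal.ofReal (r + 1)) (volume.restrict O)) :
    |κ| * |∫ x in O, ⟪‖u x‖ ^ (q - 1) • u x - ‖v x‖ ^ (q - 1) • v x, u x - v x⟫| ≤
      (β / 2) * (∫ x in O, ‖u x‖ ^ (r - 1) * ‖u x - v x‖ ^ 2) +
      (β / 4) * (∫ x in O, ‖v x‖ ^ (r - 1) * ‖u x - v x‖ ^ 2) +
      ((((r - q) / (r - 1)) * (2 * (q - 1) / (β * (r - 1))) ^ ((q - 1) / (r - q)) *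
            (|κ| * q * 2 ^ (q - 1)) ^ ((r - 1) / (r - q))) +
        (((r - q) / (r - 1)) * (4 * (q - 1) / (β * (r - 1))) ^ ((q - 1) / (r - q)) *
            (|κ| * q * 2 ^ (q - 1)) ^ ((r - 1) / (r - q)))) *
        (∫ x in O, ‖u x - v x‖ ^ 2) := by
  have : IsFiniteMeasure (volume.restrict O) := isFiniteMeasure_restrict.2 hOfin
  have hK : |κ| * q ≤ |κ| * q * 2 ^ (q - 1) :=
    le_mul_of_one_le_right (by positivity) (Real.one_le_rpow one_le_two (by linarith))
  have hconst (c : ℝ) (hc : 0 < c) : youngConst r q (β / c) (|κ| * q * 2 ^ (q - 1)) =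
      ((r - q) / (r - 1)) * (c * (q - 1) / (β * (r - 1))) ^ ((q - 1) / (r - q)) *
        (|κ| * q * 2 ^ (q - 1)) ^ ((r - 1) / (r - q)) := by
    rw [youngConst]
    field_simp
  rw [← hconst 2 two_pos, ← hconst 4 four_pos]
  exact mul_abs_integral_inner_rpow_smul_sub_rpow_smul_le hq hqr hK (by positivity)
    (by positivity) hu hv

/-- Full relaxed-monotonicity estimate for the difference `C₀(u) − C₀(v)` of the
pumping nonlinearity `C₀(u) = |u|^{q-1} u`, with explicit constants
`ϱ_{2,r}` and `ϱ_{3,r}`, on a finite-measure set `O`. -/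
theorem pumping_relaxed_monotonicity
    (d : ℕ) (O : Set (EuclideanSpace ℝ (Fin d))) (hO : MeasurableSet O)
    (hOfin : volume O ≠ ⊤)
    (r q : ℝ) (hq : 1 < q) (hqr : q < r)
    (κ β : ℝ) (hβ : 0 < β)
    (u v : EuclideanSpace ℝ (Fin d) → EuclideanSpace ℝ (Fin d))
    (hu : MemLp u (ENNReal.ofReal (r + 1)) (volume.restrict O))
    (hv : MemLp v (ENNReal.ofReal (r + 1)) (volume.restrict O)) :
    |κ| * |∫ x in O, ⟪‖u x‖ ^ (q - 1) • u x - ‖v x‖ ^ (q - 1) • v x, u x - v x⟫| ≤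
      (β / 2) * (∫ x in O, ‖u x‖ ^ (r - 1) * ‖u x - v x‖ ^ 2) +
      (β / 4) * (∫ x in O, ‖v x‖ ^ (r - 1) * ‖u x - v x‖ ^ 2) +
      ((((r - q) / (r - 1)) * (2 * (q - 1) / (β * (r - 1))) ^ ((q - 1) / (r - q)) *
            (|κ| * q * 2 ^ (q - 1)) ^ ((r - 1) / (r - q))) +
        (((r - q) / (r - 1)) * (4 * (q - 1) / (β * (r - 1))) ^ ((q - 1) / (r - q)) *
            (|κ| * q * 2 ^ (q - 1)) ^ ((r - 1) / (r - q)))) *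
        (∫ x in O, ‖u x - v x‖ ^ 2) :=
  pumping_relaxed_monotonicity_general d O hOfin r q hq hqr κ β hβ u v hu hv
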